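/- Quantum Bayesian Inference Theorem, forward direction: Let τ be a quantum state on ℂ^n ⊗ ℂ^m (a positive semidefinite trace-1 matrix indexed by Fin n × Fin m) with proj(τ) positive definite, and let p be a predicate (effect) on ℂ^n such that tr(τ * (p ⊗ 1)) ≠ 0 and tr(proj(τ) * pᵀ) ≠ 0. Then the second marginal of the lower conditioning of τ by p ⊗ 1 equals the state transformation along extr(τ) of the upper conditioning of proj(τ) by pᵀ: M₂(τ|_{p ⊗ 1}) = extr(τ) ≫ (proj(τ)|^{pᵀ}). Here p ⊗ 1 is the Kronecker product (p ⊗ 1) (i,k) (j,ℓ) := p i j * δ_{k ℓ}, and √(p ⊗ 1) = √p ⊗ 1. -/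

import Mathlib

/-! The square root √(proj τ) in the upper conditioning is cancelled by the two factors
(√(proj τ))⁻¹ in extr(τ), so, τ being Hermitian, extr(τ) ≫ (proj(τ)|^{pᵀ}) is the pairing
`∑ i j, τ (i, k) (j, ℓ) * p j i` divided by tr(proj(τ) pᵀ). On the other side, the partial trace
over the first factor is cyclic with respect to `A ⊗ 1`, so the second marginal of
(√p ⊗ 1) τ (√p ⊗ 1) is the same pairing, and the normalisations agree because
tr(τ (p ⊗ 1)) = tr(proj(τ) pᵀ). -/

open Matrix Kronecker
open scoped ComplexOrder

noncomputable section

/-- The positive semidefinite square root of a positive semidefinite matrix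
(Mathlib's former `Matrix.PosSemidef.sqrt`, removed upstream). -/
def Matrix.PosSemidef.sqrt {n : Type*} [Fintype n] [DecidableEq n] {A : Matrix n n ℂ}
    (hA : A.PosSemidef) : Matrix n n ℂ :=
  hA.1.eigenvectorUnitary.1 * diagonal ((↑) ∘ (√·) ∘ hA.1.eigenvalues) *
  (star hA.1.eigenvectorUnitary : Matrix n n ℂ)

/-- Transpose of the first marginal of a joint quantum state. -/
def qproj {n m : ℕ} (τ : Matrix (Fin n × Fin m) (Fin n × Fin m) ℂ) :
    Matrix (Fin n) (Fin n) ℂ :=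
  Matrix.of fun i j => ∑ k, τ (j, k) (i, k)

/-- Channel extracted from a joint quantum state. -/
def qextr {n m : ℕ} (τ : Matrix (Fin n × Fin m) (Fin n × Fin m) ℂ)
    (h : (qproj τ).PosDef) : Fin m → Fin m → Matrix (Fin n) (Fin n) ℂ :=
  fun k ℓ => ∑ i, ∑ j, (starRingEnd ℂ) (τ (i, k) (j, ℓ))
    • ((h.posSemidef.sqrt)⁻¹ * Matrix.single i j 1 * (h.posSemidef.sqrt)⁻¹)

namespace Matrix

variable {ι κ R : Type*} [Fintype ι] [Fintype κ] [DecidableEq κ]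

theorem PosSemidef.sqrt_mul_self [DecidableEq ι] {A : Matrix ι ι ℂ} (hA : A.PosSemidef) :
    hA.sqrt * hA.sqrt = A := by
  set U : Matrix ι ι ℂ := hA.1.eigenvectorUnitary.1
  set D : Matrix ι ι ℂ := diagonal ((↑) ∘ (√·) ∘ hA.1.eigenvalues)
  have hU : star U * U = 1 := Unitary.coe_star_mul_self _
  have hD : D * D = diagonal (((↑) : ℝ → ℂ) ∘ hA.1.eigenvalues) := by
    rw [diagonal_mul_diagonal]
    congr 1
    funext i
    simp only [Function.comp_apply]
    rw [← Complex.ofReal_mul, Real.mul_self_sqrt (hA.eigenvalues_nonneg i)]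
  calc hA.sqrt * hA.sqrt = U * D * (star U * U) * D * star U := by
        simp only [sqrt, U, D, Matrix.mul_assoc]
    _ = A := by
        rw [hU, Matrix.mul_one, Matrix.mul_assoc U D D, hD]
        conv_rhs => rw [hA.1.spectral_theorem, Unitary.conjStarAlgAut_apply]
        rfl

theorem PosDef.isUnit_sqrt [DecidableEq ι] {A : Matrix ι ι ℂ} (hA : A.PosDef) :
    IsUnit hA.posSemidef.sqrt := by
  have hdet : IsUnit (hA.posSemidef.sqrt.det * hA.posSemidef.sqrt.det) := by
    rw [← det_mul, hA.posSemidef.sqrt_mul_self]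
    exact hA.det_pos.ne'.isUnit
  exact (isUnit_iff_isUnit_det _).mpr (isUnit_of_mul_isUnit_left hdet)

theorem kronecker_one_mul_apply [CommSemiring R] (A : Matrix ι ι R)
    (τ : Matrix (ι × κ) (ι × κ) R) (i : ι) (k : κ) (x : ι × κ) :
    ((A ⊗ₖ (1 : Matrix κ κ R)) * τ) (i, k) x = ∑ a, A i a * τ (a, k) x := by
  simp [mul_apply, Fintype.sum_prod_type, one_apply]

theorem mul_kronecker_one_apply [CommSemiring R] (A : Matrix ι ι R)
    (τ : Matrix (ι × κ) (ι × κ) R) (x : ι × κ) (j : ι) (l : κ) :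
    (τ * (A ⊗ₖ (1 : Matrix κ κ R))) x (j, l) = ∑ b, τ x (b, l) * A b j := by
  simp [mul_apply, Fintype.sum_prod_type, one_apply]

theorem sum_kronecker_one_mul_mul_kronecker_one_apply [CommSemiring R]
    (A : Matrix ι ι R) (τ : Matrix (ι × κ) (ι × κ) R) (k l : κ) :
    ∑ i, ((A ⊗ₖ (1 : Matrix κ κ R)) * τ * (A ⊗ₖ (1 : Matrix κ κ R))) (i, k) (i, l)
      = ∑ a, ∑ b, τ (a, k) (b, l) * (A * A) b a := by
  simp only [mul_kronecker_one_apply, kronecker_one_mul_apply]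
  simp only [mul_apply, Finset.sum_mul, Finset.mul_sum]
  conv_rhs => rw [Finset.sum_comm]
  rw [Finset.sum_comm]
  refine Finset.sum_congr rfl fun b _ => ?_
  rw [Finset.sum_comm]
  exact Finset.sum_congr rfl fun a _ => Finset.sum_congr rfl fun i _ => by ring

theorem trace_conj_single_mul_conj [DecidableEq ι] [CommRing R] {s : Matrix ι ι R}
    (hs : IsUnit s) (X : Matrix ι ι R) (i j : ι) :
    (s⁻¹ * single i j 1 * s⁻¹ * (s * X * s)).trace = X j i := by
  have hdet : IsUnit s.det := (isUnit_iff_isUnit_det s).mp hs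
  calc (s⁻¹ * single i j 1 * s⁻¹ * (s * X * s)).trace
      = (s⁻¹ * (single i j 1 * X) * s).trace := by
        simp only [Matrix.mul_assoc, ← Matrix.mul_assoc s⁻¹ s, nonsing_inv_mul s hdet,
          Matrix.one_mul]
    _ = (single i j 1 * X).trace := by
        rw [trace_mul_comm, ← Matrix.mul_assoc, mul_nonsing_inv s hdet, Matrix.one_mul]
    _ = X j i := by rw [trace_single_mul, one_smul]

end Matrix

theorem trace_mul_kronecker_one_eq_trace_qproj_mul_transpose {n m : ℕ}
    (τ : Matrix (Fin n × Fin m) (Fin n × Fin m) ℂ) (p : Matrix (Fin n) (Fin n) ℂ) :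
    (τ * (p ⊗ₖ (1 : Matrix (Fin m) (Fin m) ℂ))).trace = (qproj τ * pᵀ).trace := by
  simp only [trace, diag_apply, Fintype.sum_prod_type, mul_kronecker_one_apply]
  simp only [mul_apply, qproj, of_apply, transpose_apply, Finset.sum_mul]
  conv_rhs => rw [Finset.sum_comm]
  exact Finset.sum_congr rfl fun j _ => Finset.sum_comm

theorem trace_qextr_mul_conj_sqrt {n m : ℕ} {τ : Matrix (Fin n × Fin m) (Fin n × Fin m) ℂ}
    (hτ : τ.IsHermitian) (h : (qproj τ).PosDef) (X : Matrix (Fin n) (Fin n) ℂ) (k ℓ : Fin m) :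
    (qextr τ h ℓ k * (h.posSemidef.sqrt * X * h.posSemidef.sqrt)).trace
      = ∑ i, ∑ j, τ (i, k) (j, ℓ) * X i j := by
  have hconj : ∀ i j, starRingEnd ℂ (τ (i, ℓ) (j, k)) = τ (j, k) (i, ℓ) :=
    fun i j => hτ.apply (j, k) (i, ℓ)
  simp only [qextr, Matrix.sum_mul, trace_sum, smul_mul, trace_smul,
    trace_conj_single_mul_conj h.isUnit_sqrt, hconj, smul_eq_mul]
  exact Finset.sum_comm

theorem quantum_bayesian_inference_forward_general {n m : ℕ}
    (τ : Matrix (Fin n × Fin m) (Fin n × Fin m) ℂ)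
    (hτ : τ.PosSemidef)
    (hproj : (qproj τ).PosDef)
    (p : Matrix (Fin n) (Fin n) ℂ)
    (hp : p.PosSemidef) :
    ∀ k ℓ : Fin m,
      (∑ i, (((τ * (p ⊗ₖ (1 : Matrix (Fin m) (Fin m) ℂ))).trace)⁻¹
          • ((hp.sqrt ⊗ₖ (1 : Matrix (Fin m) (Fin m) ℂ)) * τ
              * (hp.sqrt ⊗ₖ (1 : Matrix (Fin m) (Fin m) ℂ)))) (i, k) (i, ℓ))
        = (qextr τ hproj ℓ k
            * (((qproj τ * pᵀ).trace)⁻¹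
                • (hproj.posSemidef.sqrt * pᵀ * hproj.posSemidef.sqrt))).trace := by
  intro k ℓ
  rw [trace_mul_kronecker_one_eq_trace_qproj_mul_transpose, Matrix.mul_smul, trace_smul,
    trace_qextr_mul_conj_sqrt hτ.isHermitian]
  simp only [Matrix.smul_apply, ← Finset.smul_sum]
  rw [sum_kronecker_one_mul_mul_kronecker_one_apply, hp.sqrt_mul_self]
  rfl

/-- Quantum Bayesian Inference Theorem, forward direction:
`M₂(τ|_{p ⊗ 1}) = extr(τ) ≫ (proj(τ)|^{pᵀ})`, where lower conditioning of `τ`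
by `p ⊗ 1` uses `√(p ⊗ 1) = √p ⊗ 1`. -/
theorem quantum_bayesian_inference_forward {n m : ℕ}
    (τ : Matrix (Fin n × Fin m) (Fin n × Fin m) ℂ)
    (hτ : τ.PosSemidef) (hτtr : τ.trace = 1)
    (hproj : (qproj τ).PosDef)
    (p : Matrix (Fin n) (Fin n) ℂ)
    (hp : p.PosSemidef) (hp1 : (1 - p).PosSemidef)
    (hv : (τ * (p ⊗ₖ (1 : Matrix (Fin m) (Fin m) ℂ))).trace ≠ 0)
    (hv' : (qproj τ * pᵀ).trace ≠ 0) :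
    ∀ k ℓ : Fin m,
      (∑ i, (((τ * (p ⊗ₖ (1 : Matrix (Fin m) (Fin m) ℂ))).trace)⁻¹
          • ((hp.sqrt ⊗ₖ (1 : Matrix (Fin m) (Fin m) ℂ)) * τ
              * (hp.sqrt ⊗ₖ (1 : Matrix (Fin m) (Fin m) ℂ)))) (i, k) (i, ℓ))
        = (qextr τ hproj ℓ k
            * (((qproj τ * pᵀ).trace)⁻¹
                • (hproj.posSemidef.sqrt * pᵀ * hproj.posSemidef.sqrt))).trace :=
  quantum_bayesian_inference_forward_general τ hτ hproj p hp

end
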